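/- arXiv:1606.02004 — 2 statements merged into one kernel-verified Lean document; each statement's English description precedes it below -/
import Mathlib

section
/- Let $U$ be a linear subspace of a Banach space $X$ with norm $\|\cdot\|$. Suppose that for all $\epsilon > 0$ there exists a finite set of bounded linear functionals $\alpha_1, \dots, \alpha_k$ on $U$ such that for all $\eta \in U$, $\|\eta\| \le \max_{1\le i\le k} |\alpha_i(\eta)| + \epsilon$. Then the unit ball of $U$ is totally bounded in $X$, i.e., the inclusion of $U$ into $X$ is a compact embedding. -/
theorem stmt_2 (X : Type*) [NormedAddCommGroup X] [NormedSpace ℝ X] [CompleteSpace X]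
    (U : Submodule ℝ X)
    (h : ∀ ε > (0 : ℝ), ∃ (k : ℕ) (a : Fin k → (U →L[ℝ] ℝ)),
      ∀ η : U, ‖η‖ ≤ (⨆ i, |a i η|) + ε) :
    TotallyBounded ((fun u : U => (u : X)) '' Metric.closedBall 0 1) := by
  rw [Metric.totallyBounded_iff]
  intro ε hε
  obtain ⟨k, a, ha⟩ := h (ε / 4) (by linarith)
  set T : U →L[ℝ] (Fin k → ℝ) := ContinuousLinearMap.pi a with hT
  -- the image of the unit ball under T is totally bounded
  have hsub : T '' Metric.closedBall 0 1 ⊆ Metric.closedBall 0 ‖T‖ := by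
    rintro _ ⟨η, hη, rfl⟩
    simp only [Metric.mem_closedBall, dist_zero_right] at *
    calc ‖T η‖ ≤ ‖T‖ * ‖η‖ := T.le_opNorm η
      _ ≤ ‖T‖ * 1 := mul_le_mul_of_nonneg_left hη (norm_nonneg T)
      _ = ‖T‖ := mul_one _
  have tb : TotallyBounded (T '' Metric.closedBall 0 1) :=
    (isCompact_closedBall (0 : Fin k → ℝ) ‖T‖).totallyBounded.subset hsub
  obtain ⟨t, hts, htfin, hcov⟩ := totallyBounded_iff_subset.mp tb _
    (Metric.dist_mem_uniformity (show (0 : ℝ) < ε / 4 by linarith))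
  choose! f hf1 hf2 using fun y (hy : y ∈ t) => hts hy
  refine ⟨(fun y => ((f y : U) : X)) '' t, htfin.image _, ?_⟩
  rintro _ ⟨η, hη, rfl⟩
  obtain ⟨y, hy, hdy⟩ := Set.mem_iUnion₂.mp (hcov ⟨η, hη, rfl⟩)
  refine Set.mem_iUnion₂.mpr ⟨((f y : U) : X), ⟨y, hy, rfl⟩, ?_⟩
  have hsup : (⨆ i, |a i (η - f y)|) ≤ ‖T (η - f y)‖ := by
    rcases isEmpty_or_nonempty (Fin k) with hk | hk
    · simp [Real.iSup_of_isEmpty, norm_nonneg]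
    · refine ciSup_le fun i => ?_
      have : a i (η - f y) = T (η - f y) i := by simp [hT]
      rw [this, ← Real.norm_eq_abs]
      exact norm_le_pi_norm (T (η - f y)) i
  have hTd : ‖T (η - f y)‖ < ε / 4 := by
    have : T (η - f y) = T η - y := by rw [map_sub, hf2 y hy]
    rw [this, ← dist_eq_norm]
    exact hdy
  have hnorm : ‖η - f y‖ < ε := by
    have := ha (η - f y)
    linarith
  have : dist ((η : U) : X) ((f y : U) : X) = ‖η - f y‖ := by
    rw [dist_eq_norm, ← Submodule.coe_sub]
    rfl
  rw [Metric.mem_ball, this]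
  exact hnorm
end

section
/- Let $f : [0,1] \to [0,1]$ be the map defined piecewise as the inverse of $w_0$ on $[0,A)$ and the inverse of $w_1$ on $[A,1]$, where $w_0(x)=\int_0^x \phi$, $w_1(x) = A + \int_0^x(1-\phi)$, and $\phi$ is a continuous strictly decreasing function with $\phi(0)=1$, $\phi(1)=0$. Then $f(0) = 0$, $f(1) = 1$, and for $x \in (0,A)$, $f'(x) = 1/\phi(f(x)) \ge 1$, while for $x \in (A,1)$, $f'(x) = 1/(1-\phi(f(x))) \ge 1$; moreover $f'(0) = f'(1) = 1$, so $0$ and $1$ are neutral fixed points of the expanding map $f$. -/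
/-!
Each branch of `f` inverts a primitive `w` of a continuous function that is positive on `(0, 1)`,
so `w` is strictly increasing and `f` is strictly increasing on the corresponding interval, with
an interval as image; such a monotone map is continuous. The easy half of the inverse function
theorem then gives `f' = 1 / w' ∘ f`, also one-sidedly at the endpoints, where
`w₀' 0 = φ 0 = 1` and `w₁' 1 = 1 - φ 1 = 1`. Since `0 < φ < 1` on `(0, 1)`, both branches are
expanding.
-/

open Set Filter Topology

section InverseBranch

variable {α β : Type*} {w : β → α} {f : α → β} {s : Set α}

theorem Set.InjOn.surjOn_of_leftInvOn {u t : Set β} (hw : InjOn w u) (htu : t ⊆ u)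
    (hmaps : MapsTo f s u) (hinv : LeftInvOn w f s) (hwt : MapsTo w t s) : SurjOn f s t :=
  fun y hy ↦ ⟨w y, hwt hy, hw (hmaps (hwt hy)) (htu hy) (hinv (hwt hy))⟩

variable [LinearOrder α] [LinearOrder β] {a b : β}

theorem MonotoneOn.strictMonoOn_of_leftInvOn {u : Set β} (hw : MonotoneOn w u)
    (hmaps : MapsTo f s u) (hinv : LeftInvOn w f s) : StrictMonoOn f s := by
  intro x hx y hy hxy
  by_contra! h
  have := hw (hmaps hy) (hmaps hx) h
  rw [hinv hx, hinv hy] at this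
  exact hxy.not_ge this

theorem mapsTo_Ioo_of_leftInvOn (hmaps : MapsTo f (Ioo (w a) (w b)) (Icc a b))
    (hinv : LeftInvOn w f (Ioo (w a) (w b))) : MapsTo f (Ioo (w a) (w b)) (Ioo a b) := by
  intro x hx
  refine ⟨(hmaps hx).1.lt_of_ne fun h ↦ hx.1.ne ?_, (hmaps hx).2.lt_of_ne fun h ↦ hx.2.ne ?_⟩
  · rw [h, hinv hx]
  · rw [← h, hinv hx]

theorem StrictMonoOn.apply_left_eq_of_leftInvOn (hw : StrictMonoOn w (Icc a b)) (hab : a < b)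
    (hmaps : MapsTo f (Ico (w a) (w b)) (Icc a b)) (hinv : LeftInvOn w f (Ico (w a) (w b))) :
    f (w a) = a :=
  have hwa : w a ∈ Ico (w a) (w b) :=
    left_mem_Ico.2 (hw (left_mem_Icc.2 hab.le) (right_mem_Icc.2 hab.le) hab)
  hw.injOn (hmaps hwa) (left_mem_Icc.2 hab.le) (hinv hwa)

theorem StrictMonoOn.apply_right_eq_of_leftInvOn (hw : StrictMonoOn w (Icc a b)) (hab : a < b)
    (hmaps : MapsTo f (Ioc (w a) (w b)) (Icc a b)) (hinv : LeftInvOn w f (Ioc (w a) (w b))) :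
    f (w b) = b :=
  have hwb : w b ∈ Ioc (w a) (w b) :=
    right_mem_Ioc.2 (hw (left_mem_Icc.2 hab.le) (right_mem_Icc.2 hab.le) hab)
  hw.injOn (hmaps hwb) (right_mem_Icc.2 hab.le) (hinv hwb)

variable [TopologicalSpace α] [OrderTopology α] [TopologicalSpace β] [OrderTopology β]
  [DenselyOrdered β]

theorem StrictMonoOn.continuousAt_of_leftInvOn (hw : StrictMonoOn w (Icc a b))
    (hmaps : MapsTo f (Ioo (w a) (w b)) (Icc a b)) (hinv : LeftInvOn w f (Ioo (w a) (w b)))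
    {x : α} (hx : x ∈ Ioo (w a) (w b)) : ContinuousAt f x := by
  have hfx := mapsTo_Ioo_of_leftInvOn hmaps hinv hx
  exact (hw.monotoneOn.strictMonoOn_of_leftInvOn hmaps hinv).continuousAt_of_image_mem_nhds
    (Ioo_mem_nhds hx.1 hx.2) <| mem_of_superset (Ioo_mem_nhds hfx.1 hfx.2) <|
      hw.injOn.surjOn_of_leftInvOn Ioo_subset_Icc_self hmaps hinv hw.mapsTo_Ioo

theorem StrictMonoOn.continuousWithinAt_Ici_of_leftInvOn (hw : StrictMonoOn w (Icc a b))
    (hab : a < b) (hmaps : MapsTo f (Ico (w a) (w b)) (Icc a b))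
    (hinv : LeftInvOn w f (Ico (w a) (w b))) : ContinuousWithinAt f (Ici (w a)) (w a) := by
  have hwab : w a < w b := hw (left_mem_Icc.2 hab.le) (right_mem_Icc.2 hab.le) hab
  have hfa : f (w a) = a := hw.apply_left_eq_of_leftInvOn hab hmaps hinv
  refine (hw.monotoneOn.strictMonoOn_of_leftInvOn hmaps hinv)
    |>.continuousWithinAt_right_of_image_mem_nhdsWithin (Ico_mem_nhdsGE hwab) ?_
  rw [hfa]
  exact mem_of_superset (Ico_mem_nhdsGE hab)
    (hw.injOn.surjOn_of_leftInvOn Ico_subset_Icc_self hmaps hinv hw.mapsTo_Ico)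

theorem StrictMonoOn.continuousWithinAt_Iic_of_leftInvOn (hw : StrictMonoOn w (Icc a b))
    (hab : a < b) (hmaps : MapsTo f (Ioc (w a) (w b)) (Icc a b))
    (hinv : LeftInvOn w f (Ioc (w a) (w b))) : ContinuousWithinAt f (Iic (w b)) (w b) := by
  have hwab : w a < w b := hw (left_mem_Icc.2 hab.le) (right_mem_Icc.2 hab.le) hab
  have hfb : f (w b) = b := hw.apply_right_eq_of_leftInvOn hab hmaps hinv
  refine (hw.monotoneOn.strictMonoOn_of_leftInvOn hmaps hinv)
    |>.continuousWithinAt_left_of_image_mem_nhdsWithin (Ioc_mem_nhdsLE hwab) ?_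
  rw [hfb]
  exact mem_of_superset (Ioc_mem_nhdsLE hab)
    (hw.injOn.surjOn_of_leftInvOn Ioc_subset_Icc_self hmaps hinv hw.mapsTo_Ioc)

end InverseBranch

theorem HasDerivWithinAt.of_local_left_inverse {𝕜 : Type*} [NontriviallyNormedField 𝕜]
    {f g : 𝕜 → 𝕜} {f' a : 𝕜} {s t : Set 𝕜} (hg : Tendsto g (𝓝[s] a) (𝓝[t] (g a)))
    (hf : HasDerivWithinAt f f' t (g a)) (hf' : f' ≠ 0) (ha : a ∈ s)
    (hfg : ∀ᶠ x in 𝓝[s] a, f (g x) = x) : HasDerivWithinAt g f'⁻¹ s a :=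
  HasFDerivWithinAt.of_local_left_inverse
    (f' := ContinuousLinearEquiv.unitsEquivAut 𝕜 (Units.mk0 f' hf')) hg hf ha hfg

section InverseBranchDeriv

variable {w f : ℝ → ℝ} {a b w' : ℝ}

theorem StrictMonoOn.hasDerivAt_of_leftInvOn (hw : StrictMonoOn w (Icc a b))
    (hmaps : MapsTo f (Ioo (w a) (w b)) (Icc a b)) (hinv : LeftInvOn w f (Ioo (w a) (w b)))
    {x : ℝ} (hx : x ∈ Ioo (w a) (w b)) (hd : HasDerivAt w w' (f x)) (hw' : w' ≠ 0) :
    HasDerivAt f w'⁻¹ x :=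
  hd.of_local_left_inverse (hw.continuousAt_of_leftInvOn hmaps hinv hx) hw'
    (eventually_of_mem (Ioo_mem_nhds hx.1 hx.2) hinv)

theorem StrictMonoOn.hasDerivWithinAt_Ici_of_leftInvOn (hw : StrictMonoOn w (Icc a b))
    (hab : a < b) (hmaps : MapsTo f (Ico (w a) (w b)) (Icc a b))
    (hinv : LeftInvOn w f (Ico (w a) (w b))) (hd : HasDerivWithinAt w w' (Icc a b) a)
    (hw' : w' ≠ 0) : HasDerivWithinAt f w'⁻¹ (Ici (w a)) (w a) := by
  have hwab : w a < w b := hw (left_mem_Icc.2 hab.le) (right_mem_Icc.2 hab.le) hab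
  have hfa : f (w a) = a := hw.apply_left_eq_of_leftInvOn hab hmaps hinv
  have hnhds : Ico (w a) (w b) ∈ 𝓝[≥] (w a) := Ico_mem_nhdsGE hwab
  have hlim : Tendsto f (𝓝[≥] (w a)) (𝓝[Icc a b] (f (w a))) :=
    tendsto_nhdsWithin_iff.2 ⟨(hw.continuousWithinAt_Ici_of_leftInvOn hab hmaps hinv).tendsto,
      eventually_of_mem hnhds hmaps⟩
  exact .of_local_left_inverse hlim (by rwa [hfa]) hw' self_mem_Ici (eventually_of_mem hnhds hinv)

theorem StrictMonoOn.hasDerivWithinAt_Iic_of_leftInvOn (hw : StrictMonoOn w (Icc a b))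
    (hab : a < b) (hmaps : MapsTo f (Ioc (w a) (w b)) (Icc a b))
    (hinv : LeftInvOn w f (Ioc (w a) (w b))) (hd : HasDerivWithinAt w w' (Icc a b) b)
    (hw' : w' ≠ 0) : HasDerivWithinAt f w'⁻¹ (Iic (w b)) (w b) := by
  have hwab : w a < w b := hw (left_mem_Icc.2 hab.le) (right_mem_Icc.2 hab.le) hab
  have hfb : f (w b) = b := hw.apply_right_eq_of_leftInvOn hab hmaps hinv
  have hnhds : Ioc (w a) (w b) ∈ 𝓝[≤] (w b) := Ioc_mem_nhdsLE hwab
  have hlim : Tendsto f (𝓝[≤] (w b)) (𝓝[Icc a b] (f (w b))) :=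
    tendsto_nhdsWithin_iff.2 ⟨(hw.continuousWithinAt_Iic_of_leftInvOn hab hmaps hinv).tendsto,
      eventually_of_mem hnhds hmaps⟩
  exact .of_local_left_inverse hlim (by rwa [hfb]) hw' self_mem_Iic (eventually_of_mem hnhds hinv)

end InverseBranchDeriv

theorem hasDerivWithinAt_integral_Icc {ψ : ℝ → ℝ} {a b x : ℝ} (hψ : ContinuousOn ψ (Icc a b))
    (hx : x ∈ Icc a b) :
    HasDerivWithinAt (fun u ↦ ∫ t in a..u, ψ t) (ψ x) (Icc a b) x := by
  have : Fact (x ∈ Icc a b) := ⟨hx⟩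
  refine intervalIntegral.integral_hasDerivWithinAt_right ?_
    ⟨Icc a b, self_mem_nhdsWithin, hψ.aestronglyMeasurable measurableSet_Icc⟩ (hψ x hx)
  exact (hψ.mono (uIcc_subset_Icc (left_mem_Icc.2 (hx.1.trans hx.2)) hx)).intervalIntegrable

theorem strictMonoOn_Icc_of_hasDerivWithinAt_pos {w w' : ℝ → ℝ} {a b : ℝ}
    (hd : ∀ x ∈ Icc a b, HasDerivWithinAt w (w' x) (Icc a b) x)
    (hpos : ∀ x ∈ Ioo a b, 0 < w' x) : StrictMonoOn w (Icc a b) := by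
  refine strictMonoOn_of_deriv_pos (convex_Icc a b) (fun x hx ↦ (hd x hx).continuousWithinAt)
    fun x hx ↦ ?_
  rw [interior_Icc] at hx
  rw [((hd x (Ioo_subset_Icc_self hx)).hasDerivAt (Icc_mem_nhds hx.1 hx.2)).deriv]
  exact hpos x hx

theorem hasDerivAt_one_div_and_one_le_of_leftInvOn {ψ w f : ℝ → ℝ} {a b x : ℝ}
    (hψ : MapsTo ψ (Ioo a b) (Ioc 0 1))
    (hd : ∀ y ∈ Icc a b, HasDerivWithinAt w (ψ y) (Icc a b) y)
    (hmaps : MapsTo f (Ioo (w a) (w b)) (Icc a b)) (hinv : LeftInvOn w f (Ioo (w a) (w b)))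
    (hx : x ∈ Ioo (w a) (w b)) : HasDerivAt f (1 / ψ (f x)) x ∧ 1 ≤ 1 / ψ (f x) := by
  have hw := strictMonoOn_Icc_of_hasDerivWithinAt_pos hd fun y hy ↦ (hψ hy).1
  have hfx := mapsTo_Ioo_of_leftInvOn hmaps hinv hx
  have hdfx := (hd _ (Ioo_subset_Icc_self hfx)).hasDerivAt (Icc_mem_nhds hfx.1 hfx.2)
  rw [one_div]
  exact ⟨hw.hasDerivAt_of_leftInvOn hmaps hinv hx hdfx (hψ hfx).1.ne',
    one_le_inv₀ (hψ hfx).1 |>.2 (hψ hfx).2⟩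

theorem stmt_12 (φ : ℝ → ℝ)
    (hcont : ContinuousOn φ (Set.Icc 0 1))
    (hanti : StrictAntiOn φ (Set.Icc 0 1))
    (h0 : φ 0 = 1) (h1 : φ 1 = 0)
    (A : ℝ) (hA : A = ∫ t in (0 : ℝ)..1, φ t)
    (w₀ w₁ : ℝ → ℝ)
    (hw₀ : ∀ x, w₀ x = ∫ t in (0 : ℝ)..x, φ t)
    (hw₁ : ∀ x, w₁ x = A + ∫ t in (0 : ℝ)..x, (1 - φ t))
    (f : ℝ → ℝ)
    (hf₀ : ∀ x ∈ Set.Ico 0 A, f x ∈ Set.Icc (0 : ℝ) 1 ∧ w₀ (f x) = x)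
    (hf₁ : ∀ x ∈ Set.Icc A 1, f x ∈ Set.Icc (0 : ℝ) 1 ∧ w₁ (f x) = x) :
    f 0 = 0 ∧ f 1 = 1 ∧
    (∀ x ∈ Set.Ioo 0 A, HasDerivAt f (1 / φ (f x)) x ∧ 1 ≤ 1 / φ (f x)) ∧
    (∀ x ∈ Set.Ioo A 1, HasDerivAt f (1 / (1 - φ (f x))) x ∧ 1 ≤ 1 / (1 - φ (f x))) ∧
    HasDerivWithinAt f 1 (Set.Icc 0 1) 0 ∧
    HasDerivWithinAt f 1 (Set.Icc 0 1) 1 := by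
  have hφ : MapsTo φ (Ioo 0 1) (Ioo 0 1) := by simpa only [h0, h1] using hanti.mapsTo_Ioo
  have hd₀ : ∀ x ∈ Icc (0 : ℝ) 1, HasDerivWithinAt w₀ (φ x) (Icc 0 1) x := by
    rw [funext hw₀]; exact fun x ↦ hasDerivWithinAt_integral_Icc hcont
  have hd₁ : ∀ x ∈ Icc (0 : ℝ) 1, HasDerivWithinAt w₁ (1 - φ x) (Icc 0 1) x := by
    rw [funext hw₁]
    exact fun x hx ↦ (hasDerivWithinAt_integral_Icc (continuousOn_const.sub hcont) hx).const_add A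
  have hmono₀ := strictMonoOn_Icc_of_hasDerivWithinAt_pos hd₀ fun x hx ↦ (hφ hx).1
  have hmono₁ := strictMonoOn_Icc_of_hasDerivWithinAt_pos hd₁ fun x hx ↦ sub_pos.2 (hφ hx).2
  have hw₀0 : w₀ 0 = 0 := by simp [hw₀]
  have hw₀1 : w₀ 1 = A := by rw [hw₀, hA]
  have hw₁0 : w₁ 0 = A := by simp [hw₁]
  have hw₁1 : w₁ 1 = 1 := by
    rw [hw₁, intervalIntegral.integral_sub intervalIntegrable_const
      (hcont.intervalIntegrable_of_Icc zero_le_one), ← hA]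
    simp
  obtain ⟨hmaps₀, hinv₀⟩ : MapsTo f (Ico (w₀ 0) (w₀ 1)) (Icc 0 1) ∧
      LeftInvOn w₀ f (Ico (w₀ 0) (w₀ 1)) := by
    rw [hw₀0, hw₀1]; exact ⟨fun x hx ↦ (hf₀ x hx).1, fun x hx ↦ (hf₀ x hx).2⟩
  obtain ⟨hmaps₁, hinv₁⟩ : MapsTo f (Ioc (w₁ 0) (w₁ 1)) (Icc 0 1) ∧
      LeftInvOn w₁ f (Ioc (w₁ 0) (w₁ 1)) := by
    rw [hw₁0, hw₁1]
    exact ⟨fun x hx ↦ (hf₁ x (Ioc_subset_Icc_self hx)).1,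
      fun x hx ↦ (hf₁ x (Ioc_subset_Icc_self hx)).2⟩
  have hψ₁ : MapsTo (fun t ↦ 1 - φ t) (Ioo 0 1) (Ioc 0 1) := fun x hx ↦
    ⟨sub_pos.2 (hφ hx).2, sub_le_self 1 (hφ hx).1.le⟩
  refine ⟨?_, ?_, fun x hx ↦ ?_, fun x hx ↦ ?_, ?_, ?_⟩
  · simpa only [hw₀0] using hmono₀.apply_left_eq_of_leftInvOn zero_lt_one hmaps₀ hinv₀
  · simpa only [hw₁1] using hmono₁.apply_right_eq_of_leftInvOn zero_lt_one hmaps₁ hinv₁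
  · exact hasDerivAt_one_div_and_one_le_of_leftInvOn (hφ.mono_right Ioo_subset_Ioc_self) hd₀
      (hmaps₀.mono_left Ioo_subset_Ico_self) (hinv₀.mono Ioo_subset_Ico_self) (by rwa [hw₀0, hw₀1])
  · exact hasDerivAt_one_div_and_one_le_of_leftInvOn hψ₁ hd₁
      (hmaps₁.mono_left Ioo_subset_Ioc_self) (hinv₁.mono Ioo_subset_Ioc_self) (by rwa [hw₁0, hw₁1])
  · have := hmono₀.hasDerivWithinAt_Ici_of_leftInvOn zero_lt_one hmaps₀ hinv₀
      (hd₀ 0 (left_mem_Icc.2 zero_le_one)) (by simp [h0])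
    rw [h0, inv_one, hw₀0] at this
    exact this.mono Icc_subset_Ici_self
  · have := hmono₁.hasDerivWithinAt_Iic_of_leftInvOn zero_lt_one hmaps₁ hinv₁
      (hd₁ 1 (right_mem_Icc.2 zero_le_one)) (by simp [h1])
    rw [h1, sub_zero, inv_one, hw₁1] at this
    exact this.mono Icc_subset_Iic_self
end
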